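/- Let f₀,F : ℝⁿ×ℝ^d → ℝ be C² functions and let (x̄,w̄) satisfy F(x̄,w̄) = 0 and ∇ₓf₀(x̄,w̄) = 0 (so (x̄,λ) with λ = 0 solves the generalized equation). Then the generalized equation 0 ∈ g(x,α,w̄) + N_K(x,α) is strongly regular at (x̄,0) if and only if the Hessian ∇²ₓₓf₀(x̄,w̄) is nonsingular and ⟨∇ₓF(x̄,w̄), (∇²ₓₓf₀(x̄,w̄))⁻¹∇ₓF(x̄,w̄)⟩ > 0. -/

import Mathlib

open Matrix RealInnerProductSpace

noncomputable section

/-- The Euclidean space `ℝⁿ`. -/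
abbrev En (n : ℕ) := EuclideanSpace ℝ (Fin n)

/-- The partial gradient in `x` of a function `f : ℝⁿ × ℝ^d → ℝ`. -/
def gradx {n d : ℕ} (f : En n × En d → ℝ) (x : En n) (w : En d) : En n :=
  gradient (fun y => f (y, w)) x

/-- The Lagrangian `L(x,α,w) = f₀(x,w) + α F(x,w)`. -/
def Lag {n d : ℕ} (f₀ F : En n × En d → ℝ) (x : En n) (α : ℝ) (w : En d) : ℝ :=
  f₀ (x, w) + α * F (x, w)

/-- The map `g(x,α,w) = (∇ₓL(x,α,w), −F(x,w)) ∈ ℝⁿ × ℝ`, as a function of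
`z = (x,α)`. -/
def gmap {n d : ℕ} (f₀ F : En n × En d → ℝ) (z : En n × ℝ) (w : En d) : En n × ℝ :=
  (gradient (fun y => Lag f₀ F y z.2 w) z.1, - F (z.1, w))

/-- The normal cone `N_K(z)` of the convex set `K = ℝⁿ × ℝ₊` at `z`
(`N_K(z) = ∅` for `z ∉ K`). -/
def NK {n : ℕ} (z : En n × ℝ) : Set (En n × ℝ) :=
  {v | 0 ≤ z.2 ∧ ∀ y : En n × ℝ, 0 ≤ y.2 → ⟪v.1, y.1 - z.1⟫ + v.2 * (y.2 - z.2) ≤ 0}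

/-- The generalized equation `0 ∈ g(x,α,w0) + N_K(x,α)` is strongly regular at a
solution `zbar = (x̄,λ)`: there are `ℓ₀ > 0` and neighborhoods `U` of `0`, `V` of
`zbar` such that for each `q ∈ U` the linearized inclusion
`q ∈ g(zbar) + ∇g(zbar)(z − zbar) + N_K(z)` has a unique solution `z = s₀(q)` in `V`,
and `s₀ : U → V` is Lipschitz with modulus `ℓ₀`. -/
def StrongRegular {n d : ℕ} (f₀ F : En n × En d → ℝ) (w0 : En d)
    (zbar : En n × ℝ) : Prop :=
  ∃ ℓ₀ : NNReal, 0 < ℓ₀ ∧ ∃ U ∈ nhds (0 : En n × ℝ), ∃ V ∈ nhds zbar,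
    ∃ s₀ : En n × ℝ → En n × ℝ, LipschitzOnWith ℓ₀ s₀ U ∧
      ∀ q ∈ U, s₀ q ∈ V ∧
        q - gmap f₀ F zbar w0
          - (fderiv ℝ (fun z => gmap f₀ F z w0) zbar) (s₀ q - zbar) ∈ NK (s₀ q) ∧
        ∀ z ∈ V,
          q - gmap f₀ F zbar w0
            - (fderiv ℝ (fun z' => gmap f₀ F z' w0) zbar) (z - zbar) ∈ NK z →
          z = s₀ q

/-- The matrix of the Hessian `∇²ₓₓf(x0,w0)` of `f` in `x` at `(x0,w0)`. -/
def hessMat {n d : ℕ} (f : En n × En d → ℝ) (x0 : En n) (w0 : En d) :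
    Matrix (Fin n) (Fin n) ℝ :=
  Matrix.of fun i j =>
    (fderiv ℝ (fun y => gradx f y w0) x0) (EuclideanSpace.single j (1 : ℝ)) i

/-!
At a solution `(x̄, 0)` with `∇ₓf₀(x̄) = 0` and `F(x̄) = 0` the linearized generalized equation,
written in the displacement `(u, β) = z - (x̄, 0)`, is the complementarity system
`q₁ = H u + β b`, `β ≥ 0`, `q₂ + ⟪b, u⟫ ≤ 0`, `β (q₂ + ⟪b, u⟫) = 0`, where `H = ∇²ₓₓf₀(x̄)` and
`b = ∇ₓF(x̄)`. If `H u = 0` with `u ≠ 0` and, after possibly replacing `u` by `-u`,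
`⟪b, u⟫ ≤ 0`, then the whole ray `(t u, 0)`, `t ≥ 0`, solves the system for `q = 0`, contradicting
local uniqueness; so `H` is invertible. Then `u = H⁻¹ q₁ - β H⁻¹ b`, and what remains is the scalar complementarity problem
`β ≥ 0`, `L - β c ≤ 0`, `β (L - β c) = 0` with `c = ⟪b, H⁻¹ b⟫` and `L = ⟪b, H⁻¹ q₁⟫ + q₂`.
For `c > 0` its unique solution `β = max L 0 / c` is Lipschitz in `q`; for `c ≤ 0` it has no
solution at all when `q = (0, ε)` with `ε > 0`.
-/

open Filter Topology

namespace LinearizedKKT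

variable {E : Type*} [NormedAddCommGroup E] [InnerProductSpace ℝ E]

def jacobian (A : E →L[ℝ] E) (b : E) : E × ℝ →L[ℝ] E × ℝ :=
  (A ∘L .fst ℝ E ℝ + (ContinuousLinearMap.snd ℝ E ℝ).smulRight b).prod
    (-(innerSL ℝ b ∘L .fst ℝ E ℝ))

@[simp]
lemma jacobian_apply (A : E →L[ℝ] E) (b : E) (p : E × ℝ) :
    jacobian A b p = (A p.1 + p.2 • b, -⟪b, p.1⟫) := rfl

-- `p` is the displacement `z - (x̄, 0)`, `A = ∇²ₓₓf₀(x̄)` and `b = ∇ₓF(x̄)`: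
-- see `linearizedInclusion_iff`.
def Solves (A : E →L[ℝ] E) (b : E) (q p : E × ℝ) : Prop :=
  q.1 = A p.1 + p.2 • b ∧ 0 ≤ p.2 ∧ q.2 + ⟪b, p.1⟫ ≤ 0 ∧ (q.2 + ⟪b, p.1⟫) * p.2 = 0

def StronglyRegular (A : E →L[ℝ] E) (b : E) : Prop :=
  ∃ ℓ : NNReal, 0 < ℓ ∧ ∃ U ∈ 𝓝 (0 : E × ℝ), ∃ V ∈ 𝓝 (0 : E × ℝ), ∃ s : E × ℝ → E × ℝ,
    LipschitzOnWith ℓ s U ∧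
      ∀ q ∈ U, s q ∈ V ∧ Solves A b q (s q) ∧ ∀ p ∈ V, Solves A b q p → p = s q

lemma complementarity_iff {L c β : ℝ} (hc : 0 < c) :
    (0 ≤ β ∧ L - β * c ≤ 0 ∧ (L - β * c) * β = 0) ↔ β = max L 0 / c := by
  rw [eq_div_iff hc.ne']
  constructor
  · rintro ⟨hβ, hs, hcompl⟩
    rcases mul_eq_zero.1 hcompl with h | rfl
    · rw [max_eq_left (by nlinarith)]; linarith
    · rw [max_eq_right (by linarith)]; ring
  · intro h
    rcases le_total L 0 with hL | hL
    · rw [max_eq_right hL] at h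
      obtain rfl : β = 0 := by simpa [hc.ne'] using h
      simp [hL]
    · rw [max_eq_left hL] at h
      refine ⟨nonneg_of_mul_nonneg_left (h ▸ hL) hc, ?_, ?_⟩ <;> simp [h]

lemma solves_smul_of_map_eq_zero {A : E →L[ℝ] E} {b u : E} (hu : A u = 0) (hb : ⟪b, u⟫ ≤ 0)
    {t : ℝ} (ht : 0 ≤ t) : Solves A b 0 (t • u, 0) := by
  refine ⟨by simp [hu], le_rfl, ?_, by simp⟩
  simpa [inner_smul_right] using mul_nonpos_of_nonneg_of_nonpos ht hb

lemma injective_of_eventually_unique {A : E →L[ℝ] E} {b : E}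
    (h : ∀ᶠ p in 𝓝 (0 : E × ℝ), Solves A b 0 p → p = 0) : Function.Injective A := by
  refine (injective_iff_map_eq_zero A).2 fun u hu => ?_
  wlog hb : ⟪b, u⟫ ≤ 0 generalizing u
  · exact neg_eq_zero.1 (this (-u) (by simp [hu]) (by rw [inner_neg_right]; linarith))
  have hray : Tendsto (fun t : ℝ => ((t • u, 0) : E × ℝ)) (𝓝[>] 0) (𝓝 0) :=
    (((continuous_id.smul continuous_const).prodMk continuous_const).tendsto' 0 0
      (by simp)).mono_left nhdsWithin_le_nhds
  obtain ⟨t, hsol, ht⟩ := ((hray.eventually h).and self_mem_nhdsWithin).exists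
  have htu : t • u = 0 := congrArg Prod.fst (hsol (solves_smul_of_map_eq_zero hu hb ht.le))
  exact (smul_eq_zero.1 htu).resolve_left ht.ne'

lemma StronglyRegular.injective {A : E →L[ℝ] E} {b : E} (h : StronglyRegular A b) :
    Function.Injective A := by
  obtain ⟨-, -, U, hU, V, hV, s, -, hsol⟩ := h
  obtain ⟨-, -, huniq⟩ := hsol 0 (mem_of_mem_nhds hU)
  have hs0 : 0 = s 0 := huniq 0 (mem_of_mem_nhds hV) (by simp [Solves])
  exact injective_of_eventually_unique
    (mem_of_superset hV fun p hp hsolp => (huniq p hp hsolp).trans hs0.symm)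

def solution (e : E ≃L[ℝ] E) (b : E) (q : E × ℝ) : E × ℝ :=
  (e.symm q.1, 0) + (max (⟪b, e.symm q.1⟫ + q.2) 0 / ⟪b, e.symm b⟫) • (-e.symm b, 1)

lemma solves_iff_eq_solution {e : E ≃L[ℝ] E} {b : E} (hc : 0 < ⟪b, e.symm b⟫) {q p : E × ℝ} :
    Solves e b q p ↔ p = solution e b q := by
  obtain ⟨u, β⟩ := p
  have hu : q.1 = e u + β • b ↔ u = e.symm q.1 - β • e.symm b := by
    have : e u + β • b = e (u + β • e.symm b) := by simp
    rw [this, ← e.symm_apply_eq, eq_sub_iff_add_eq, eq_comm]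
  have hslack : q.2 + ⟪b, e.symm q.1 - β • e.symm b⟫
      = (⟪b, e.symm q.1⟫ + q.2) - β * ⟪b, e.symm b⟫ := by
    rw [inner_sub_right, inner_smul_right]; ring
  simp only [Solves, solution, ContinuousLinearEquiv.coe_coe, hu, Prod.ext_iff, Prod.fst_add,
    Prod.snd_add, Prod.smul_mk, smul_neg, ← sub_eq_add_neg, smul_eq_mul, mul_one, zero_add]
  constructor
  · rintro ⟨rfl, hcompl⟩
    rw [hslack] at hcompl
    have hβ := (complementarity_iff hc).1 hcompl
    exact ⟨by rw [← hβ], hβ⟩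
  · rintro ⟨rfl, rfl⟩
    exact ⟨rfl, by rw [hslack]; exact (complementarity_iff hc).2 rfl⟩

lemma lipschitzWith_solution (e : E ≃L[ℝ] E) (b : E) : ∃ K, LipschitzWith K (solution e b) := by
  let ℓ : E × ℝ →L[ℝ] ℝ := innerSL ℝ b ∘L (e.symm : E →L[ℝ] E) ∘L .fst ℝ E ℝ + .snd ℝ E ℝ
  have hform : solution e b = fun q => (ContinuousLinearMap.inl ℝ E ℝ ∘L (e.symm : E →L[ℝ] E) ∘L
      .fst ℝ E ℝ) q + max (ℓ q) 0 • (⟪b, e.symm b⟫⁻¹ • ((-e.symm b, 1) : E × ℝ)) := by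
    ext q <;> simp [solution, ℓ, div_eq_mul_inv, mul_smul]
  rw [hform]
  exact ⟨_, ContinuousLinearMap.lipschitz _ |>.add
    ((ContinuousLinearMap.toSpanSingleton ℝ _).lipschitz.comp (ℓ.lipschitz.max_const 0))⟩

lemma inner_symm_pos_of_solves {e : E ≃L[ℝ] E} {b : E} {ε : ℝ} (hε : 0 < ε) {p : E × ℝ}
    (h : Solves e b (0, ε) p) : 0 < ⟪b, e.symm b⟫ := by
  obtain ⟨h1, hβ, hslack, -⟩ := h
  have hu : p.1 = -(p.2 • e.symm b) := by
    refine eq_neg_of_add_eq_zero_left (e.map_eq_zero_iff.1 ?_)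
    simpa using h1.symm
  rw [hu, inner_neg_right, inner_smul_right] at hslack
  by_contra! hc
  nlinarith

theorem stronglyRegular_iff (e : E ≃L[ℝ] E) (b : E) :
    StronglyRegular (e : E →L[ℝ] E) b ↔ 0 < ⟪b, e.symm b⟫ := by
  constructor
  · rintro ⟨-, -, U, hU, _, _, s, -, hsol⟩
    have hray : Tendsto (fun ε : ℝ => ((0, ε) : E × ℝ)) (𝓝[>] 0) (𝓝 0) :=
      ((continuous_const.prodMk continuous_id).tendsto' 0 0 rfl).mono_left nhdsWithin_le_nhds
    obtain ⟨ε, hq, hε⟩ := ((hray.eventually hU).and self_mem_nhdsWithin).exists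
    exact inner_symm_pos_of_solves hε (hsol _ hq).2.1
  · intro hc
    obtain ⟨K, hK⟩ := lipschitzWith_solution e b
    refine ⟨K + 1, add_pos_of_nonneg_of_pos K.2 one_pos, Set.univ, univ_mem, Set.univ, univ_mem,
      solution e b, (hK.weaken le_self_add).lipschitzOnWith, fun q _ => ⟨Set.mem_univ _, ?_, ?_⟩⟩
    · exact (solves_iff_eq_solution hc).2 rfl
    · exact fun p _ hp => (solves_iff_eq_solution hc).1 hp

end LinearizedKKT

namespace Matrix

variable {𝕜 ι : Type*} [RCLike 𝕜] [Fintype ι] [DecidableEq ι]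

lemma toEuclideanCLM_of_apply_single (A : EuclideanSpace 𝕜 ι →L[𝕜] EuclideanSpace 𝕜 ι) :
    toEuclideanCLM (𝕜 := 𝕜) (of fun i j => A (EuclideanSpace.single j 1) i) = A := by
  rw [← StarAlgEquiv.eq_symm_apply]
  ext i j
  simp [toEuclideanCLM, LinearMap.toMatrixOrthonormal_apply_apply, EuclideanSpace.inner_single_left]

lemma det_ne_zero_of_injective_toEuclideanCLM {M : Matrix ι ι 𝕜}
    (h : Function.Injective (toEuclideanCLM (𝕜 := 𝕜) M)) : M.det ≠ 0 := fun h0 => by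
  obtain ⟨v, hv, hMv⟩ := exists_mulVec_eq_zero_iff.2 h0
  refine hv (congrArg WithLp.ofLp (h (a₂ := 0) ?_))
  simp [hMv]

def toEuclideanCLE (M : Matrix ι ι 𝕜) (hM : M.det ≠ 0) :
    EuclideanSpace 𝕜 ι ≃L[𝕜] EuclideanSpace 𝕜 ι :=
  .equivOfInverse' (toEuclideanCLM (𝕜 := 𝕜) M) (toEuclideanCLM (𝕜 := 𝕜) M⁻¹)
    (by rw [← ContinuousLinearMap.mul_def, ← map_mul, mul_nonsing_inv _ hM.isUnit, map_one]; rfl)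
    (by rw [← ContinuousLinearMap.mul_def, ← map_mul, nonsing_inv_mul _ hM.isUnit, map_one]; rfl)

end Matrix

lemma mem_NK_iff {n : ℕ} {v z : En n × ℝ} :
    v ∈ NK z ↔ v.1 = 0 ∧ 0 ≤ z.2 ∧ v.2 ≤ 0 ∧ v.2 * z.2 = 0 := by
  refine ⟨fun ⟨hz, hv⟩ => ⟨?_, hz, ?_, ?_⟩, fun ⟨h1, hz, h2, h3⟩ => ⟨hz, fun y hy => ?_⟩⟩
  · exact real_inner_self_nonpos.1 (by simpa using hv (z.1 + v.1, z.2) hz)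
  · simpa using hv (z.1, z.2 + 1) (by linarith)
  · have hdown := hv (z.1, 0) le_rfl
    have hup := hv (z.1, 2 * z.2) (by linarith)
    simp only [sub_self, inner_zero_right, zero_add] at hdown hup
    nlinarith
  · rw [h1, inner_zero_left, zero_add]
    nlinarith

section Linearization

variable {n d : ℕ} {f₀ F : En n × En d → ℝ}

lemma gmap_eq {z : En n × ℝ} {w : En d} (hf₀ : DifferentiableAt ℝ (fun y => f₀ (y, w)) z.1)
    (hF : DifferentiableAt ℝ (fun y => F (y, w)) z.1) :
    gmap f₀ F z w = (gradx f₀ z.1 w + z.2 • gradx F z.1 w, -F (z.1, w)) := by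
  simp only [gmap, Lag, gradx, gradient, fderiv_fun_add hf₀ (hF.const_mul z.2), fderiv_const_mul hF]
  simp

lemma hasFDerivAt_gmap (hf₀ : ContDiff ℝ 2 f₀) (hF : ContDiff ℝ 2 F) (x : En n) (w : En d) :
    HasFDerivAt (fun z => gmap f₀ F z w)
      (LinearizedKKT.jacobian (fderiv ℝ (fun y => gradx f₀ y w) x) (gradx F x w)) (x, 0) := by
  have hpartial {f : En n × En d → ℝ} (hf : ContDiff ℝ 2 f) : ContDiff ℝ 2 fun y => f (y, w) :=
    hf.comp (contDiff_id.prodMk contDiff_const)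
  have hgrad {f : En n × En d → ℝ} (hf : ContDiff ℝ 2 f) :
      Differentiable ℝ fun y => gradx f y w :=
    ((((InnerProductSpace.toDual ℝ (En n)).symm.toContinuousLinearEquiv
      : (En n →L[ℝ] ℝ) ≃L[ℝ] En n).toContinuousLinearMap.contDiff).comp
        ((hpartial hf).fderiv_right (m := 1) le_rfl)).differentiable one_ne_zero
  have heq : (fun z => gmap f₀ F z w)
      = fun z => (gradx f₀ z.1 w + z.2 • gradx F z.1 w, -F (z.1, w)) :=
    funext fun z => gmap_eq ((hpartial hf₀).differentiable two_ne_zero _)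
      ((hpartial hF).differentiable two_ne_zero _)
  rw [heq]
  have hfst : HasFDerivAt (Prod.fst : En n × ℝ → En n) (.fst ℝ (En n) ℝ) (x, 0) := hasFDerivAt_fst
  have hA := ((hgrad hf₀) x).hasFDerivAt.comp (x, (0 : ℝ)) hfst
  have hB := hasFDerivAt_snd.smul (((hgrad hF) x).hasFDerivAt.comp (x, (0 : ℝ)) hfst)
  have hC := (hasGradientAt_iff_hasFDerivAt.1
    ((hpartial hF).differentiable two_ne_zero x).hasGradientAt).comp (x, (0 : ℝ)) hfst
  refine ((hA.add hB).prodMk hC.neg).congr_fderiv ?_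
  ext p <;> simp [gradx]

lemma linearizedInclusion_iff (hf₀ : ContDiff ℝ 2 f₀) (hF : ContDiff ℝ 2 F) {x0 : En n}
    {w0 : En d} (hFeq : F (x0, w0) = 0) (hstat : gradx f₀ x0 w0 = 0) (q z : En n × ℝ) :
    q - gmap f₀ F (x0, 0) w0 - (fderiv ℝ (fun z => gmap f₀ F z w0) (x0, 0)) (z - (x0, 0)) ∈ NK z ↔
      LinearizedKKT.Solves (fderiv ℝ (fun y => gradx f₀ y w0) x0) (gradx F x0 w0) q
        (z - (x0, 0)) := by
  have hg : gmap f₀ F (x0, 0) w0 = 0 := by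
    rw [gmap_eq ((hf₀.comp (contDiff_id.prodMk contDiff_const)).differentiable two_ne_zero _)
      ((hF.comp (contDiff_id.prodMk contDiff_const)).differentiable two_ne_zero _)]
    simp [hstat, hFeq]
  rw [(hasFDerivAt_gmap hf₀ hF x0 w0).fderiv, hg, mem_NK_iff, LinearizedKKT.jacobian_apply]
  simp [LinearizedKKT.Solves, sub_eq_zero]

end Linearization

lemma strongRegular_iff_stronglyRegular {n d : ℕ} {f₀ F : En n × En d → ℝ} {w0 : En d}
    {zbar : En n × ℝ} {A : En n →L[ℝ] En n} {b : En n}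
    (hincl : ∀ q z, q - gmap f₀ F zbar w0 - (fderiv ℝ (fun z => gmap f₀ F z w0) zbar) (z - zbar)
      ∈ NK z ↔ LinearizedKKT.Solves A b q (z - zbar)) :
    StrongRegular f₀ F w0 zbar ↔ LinearizedKKT.StronglyRegular A b := by
  simp only [StrongRegular, LinearizedKKT.StronglyRegular, hincl]
  constructor
  · rintro ⟨ℓ, hℓ, U, hU, V, hV, s, hs, hsol⟩
    refine ⟨ℓ, hℓ, U, hU, (· + zbar) ⁻¹' V,
      (continuous_add_const zbar).continuousAt.preimage_mem_nhds (by rwa [zero_add]),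
      (s · - zbar), fun x hx y hy => by simpa only [edist_sub_right] using hs hx hy,
      fun q hq => ?_⟩
    obtain ⟨hsV, hsq, huniq⟩ := hsol q hq
    refine ⟨by simpa using hsV, hsq, fun p hp hsolp => ?_⟩
    exact eq_sub_of_add_eq (huniq (p + zbar) hp (by rwa [add_sub_cancel_right]))
  · rintro ⟨ℓ, hℓ, U, hU, V, hV, s, hs, hsol⟩
    refine ⟨ℓ, hℓ, U, hU, (· - zbar) ⁻¹' V,
      (continuous_sub_right zbar).continuousAt.preimage_mem_nhds (by rwa [sub_self]),
      (s · + zbar), fun x hx y hy => by simpa only [edist_add_right] using hs hx hy,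
      fun q hq => ?_⟩
    obtain ⟨hsV, hsq, huniq⟩ := hsol q hq
    refine ⟨by simpa using hsV, by rwa [add_sub_cancel_right], fun z hz hsolz => ?_⟩
    exact eq_add_of_sub_eq (huniq (z - zbar) hz hsolz)

/-- For `F(x0,w0) = 0` and `∇ₓf₀(x0,w0) = 0` (so `(x0, 0)` solves the
generalized equation), the generalized equation `0 ∈ g(x,α,w0) + N_K(x,α)` is strongly
regular at `(x0, 0)` iff the Hessian `∇²ₓₓf₀(x0,w0)` is nonsingular and
`⟨∇ₓF(x0,w0), (∇²ₓₓf₀(x0,w0))⁻¹ ∇ₓF(x0,w0)⟩ > 0`. -/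
theorem stmt13 {n d : ℕ} (f₀ F : En n × En d → ℝ)
    (hf₀ : ContDiff ℝ 2 f₀) (hF : ContDiff ℝ 2 F)
    (x0 : En n) (w0 : En d)
    (hFeq : F (x0, w0) = 0)
    (hstat : gradx f₀ x0 w0 = 0) :
    StrongRegular f₀ F w0 (x0, 0) ↔
      ((hessMat f₀ x0 w0).det ≠ 0 ∧
        0 < (fun i => gradx F x0 w0 i) ⬝ᵥ
          (hessMat f₀ x0 w0)⁻¹.mulVec (fun i => gradx F x0 w0 i)) := by
  have hincl := linearizedInclusion_iff hf₀ hF hFeq hstat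
  rw [← toEuclideanCLM_of_apply_single (fderiv ℝ _ x0)] at hincl
  rw [strongRegular_iff_stronglyRegular hincl]
  refine ⟨fun h => ?_, fun ⟨hdet, hpos⟩ => ?_⟩
  · have hdet : (hessMat f₀ x0 w0).det ≠ 0 := det_ne_zero_of_injective_toEuclideanCLM h.injective
    refine ⟨hdet, ?_⟩
    rw [← inner_toEuclideanCLM]
    exact (LinearizedKKT.stronglyRegular_iff (toEuclideanCLE _ hdet) _).1 h
  · rw [← inner_toEuclideanCLM] at hpos
    exact (LinearizedKKT.stronglyRegular_iff (toEuclideanCLE _ hdet) _).2 hpos
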